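/- Consider the recurrence u^{k}_n = R·u^{k}_{n-1} + S·u^{k-1}_{n-1} for complex numbers R, S, with initial conditions u^{0}_n = R^n·u_0 for all n ≥ 0 and u^{k}_0 = u_0 for all k ≥ 0. Then for all k and all n ≥ k, u^{k}_n = (∑_{i=0}^{k} C(n,i) · S^i · R^{n-i}) · u_0, where C(n,i) is the binomial coefficient. -/

import Mathlib

/-! The closed form is the sum of the first `k + 1` terms of the binomial expansion of
`(R + S) ^ n`. By Pascal's rule these partial sums obey the Parareal recurrence, and they
have the same boundary values, so induction on `k` and then on `n` identifies them with `u`. -/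

open Finset

namespace Parareal

variable {α : Type*} [CommSemiring α]

def partialBinomSum (a b : α) (k n : ℕ) : α :=
  ∑ i ∈ range (k + 1), (n.choose i : α) * b ^ i * a ^ (n - i)

theorem partialBinomSum_zero_left (a b : α) (n : ℕ) : partialBinomSum a b 0 n = a ^ n := by
  simp [partialBinomSum]

theorem partialBinomSum_zero_right (a b : α) (k : ℕ) : partialBinomSum a b k 0 = 1 := by
  simp [partialBinomSum, sum_range_succ']

theorem choose_succ_mul_pow_mul_pow (a b : α) (n j : ℕ) :
    ((n + 1).choose (j + 1) : α) * b ^ (j + 1) * a ^ (n + 1 - (j + 1)) =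
      a * ((n.choose (j + 1) : α) * b ^ (j + 1) * a ^ (n - (j + 1))) +
        b * ((n.choose j : α) * b ^ j * a ^ (n - j)) := by
  rw [Nat.choose_succ_succ', Nat.add_sub_add_right]
  rcases lt_or_ge j n with hjn | hnj
  · rw [show n - j = n - (j + 1) + 1 by omega]
    push_cast
    ring
  · rw [Nat.choose_eq_zero_of_lt (Nat.lt_succ_of_le hnj)]
    push_cast
    ring

theorem partialBinomSum_succ_succ (a b : α) (k n : ℕ) :
    partialBinomSum a b (k + 1) (n + 1) =
      a * partialBinomSum a b (k + 1) n + b * partialBinomSum a b k n := by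
  simp only [partialBinomSum, mul_sum]
  rw [sum_range_succ' _ (k + 1), sum_range_succ' (fun i => a * _) (k + 1)]
  simp_rw [choose_succ_mul_pow_mul_pow a b n, sum_add_distrib]
  simp only [Nat.choose_zero_right, Nat.cast_one, pow_zero, one_mul, Nat.sub_zero]
  ring

theorem eq_partialBinomSum_mul {a b c : α} {u : ℕ → ℕ → α}
    (h0 : ∀ n, u 0 n = a ^ n * c) (hbase : ∀ k, u k 0 = c)
    (hrec : ∀ k n, u (k + 1) (n + 1) = a * u (k + 1) n + b * u k n) (k n : ℕ) :
    u k n = partialBinomSum a b k n * c := by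
  induction k generalizing n with
  | zero => rw [h0, partialBinomSum_zero_left]
  | succ k ihk =>
    induction n with
    | zero => rw [hbase, partialBinomSum_zero_right, one_mul]
    | succ n ihn => rw [hrec, ihn, ihk, partialBinomSum_succ_succ]; ring

end Parareal

theorem parareal_closed_form (R S u0 : ℂ) (u : ℕ → ℕ → ℂ)
    (h0 : ∀ n : ℕ, u 0 n = R ^ n * u0)
    (hbase : ∀ k : ℕ, u k 0 = u0)
    (hrec : ∀ k n : ℕ, u (k + 1) (n + 1) = R * u (k + 1) n + S * u k n) :
    ∀ k n : ℕ, k ≤ n →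
      u k n = (∑ i ∈ Finset.range (k + 1),
        (n.choose i : ℂ) * S ^ i * R ^ (n - i)) * u0 :=
  fun k n _ => Parareal.eq_partialBinomSum_mul h0 hbase hrec k n
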